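/- arXiv:0804.0316 — 2 statements merged into one kernel-verified Lean document; each statement's English description precedes it below -/
import Mathlib

section
/- For all positive integers N and α there exist finite subsets F1 and F2 of ℤ² such that F1 is uniquely determined by its row and column sums, |F1| = |F2|, the error in the line sums equals 2α, |F1 ∩ F2| = N² + N²α − Nα, and |F1| = N² + N²α + Nα (so that |F1| = |F1 ∩ F2| + 2Nα). -/
/-- Number of elements of `F` in row `i` (points with first coordinate `i`). -/
def rowSum (F : Finset (ℤ × ℤ)) (i : ℤ) : ℕ := (F.filter (fun p => p.1 = i)).card

/-- Number of elements of `F` in column `j` (points with second coordinate `j`). -/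
def colSum (F : Finset (ℤ × ℤ)) (j : ℤ) : ℕ := (F.filter (fun p => p.2 = j)).card

/-- The total error in the line sums of `F` and `G`:
`∑ i |r_i(F) − r_i(G)| + ∑ j |c_j(F) − c_j(G)|`. -/
noncomputable def lineError (F G : Finset (ℤ × ℤ)) : ℤ :=
  (∑ᶠ i : ℤ, |(rowSum F i : ℤ) - (rowSum G i : ℤ)|) +
  (∑ᶠ j : ℤ, |(colSum F j : ℤ) - (colSum G j : ℤ)|)

/-- `F` is uniquely determined by its row and column sums. -/
def UniquelyDetermined (F : Finset (ℤ × ℤ)) : Prop :=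
  ∀ G : Finset (ℤ × ℤ),
    (∀ i, rowSum G i = rowSum F i) → (∀ j, colSum G j = colSum F j) → G = F


/-!
`F1` is the Ferrers diagram made of the square `[0, N)²`, a staircase of `N` steps of width `α`
attached to its right and the transpose of that staircase attached below it. Every column of a
Ferrers diagram is an initial segment, so the weight `2 c_j(F1) - 2 i - 1` of a cell `(i, j)` is
positive exactly on `F1`; its total over a set depends only on the line sums, which forces
uniqueness.

`F2` moves `2Nα` cells of `F1` to the right inside their rows: each of the `N` long rows moves its
last `α` cells by `α`, each short row below the square moves its last cell by one, and the `α` rows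
of length `N` put theirs on an antidiagonal filling the gap left by row `N - 1`. Row sums do not
change; column `0` loses `α` cells and the `α` columns beyond the longest row gain one each.
-/

open Finset

section LineSums

lemma card_filter_union_of_disjoint {α : Type*} [DecidableEq α] {X Y : Finset α}
    (P : α → Prop) [DecidablePred P] (h : Disjoint X Y) :
    #{p ∈ X ∪ Y | P p} = #{p ∈ X | P p} + #{p ∈ Y | P p} := by
  rw [filter_union, card_union_of_disjoint (disjoint_filter_filter h)]

lemma card_filter_sdiff_union {α : Type*} [DecidableEq α] {F R A : Finset α}
    (P : α → Prop) [DecidablePred P] (hR : R ⊆ F) (hA : Disjoint F A) :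
    #{p ∈ F \ R ∪ A | P p} + #{p ∈ R | P p} = #{p ∈ F | P p} + #{p ∈ A | P p} := by
  have hsplit : #{p ∈ F \ R | P p} + #{p ∈ R | P p} = #{p ∈ F | P p} := by
    rw [← card_filter_union_of_disjoint P sdiff_disjoint, sdiff_union_of_subset hR]
  rw [card_filter_union_of_disjoint P (disjoint_of_subset_left sdiff_subset hA)]
  omega

lemma sum_comp_eq_of_card_fiber_eq {α κ M : Type*} [DecidableEq κ] [AddCommMonoid M]
    {G F : Finset α} {g : α → κ} (h : ∀ k, #{p ∈ G | g p = k} = #{p ∈ F | g p = k})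
    (f : κ → M) : ∑ p ∈ G, f (g p) = ∑ p ∈ F, f (g p) := by
  have himage : G.image g = F.image g := by
    ext k
    simp only [mem_image, ← filter_nonempty_iff, ← card_pos, h]
  rw [sum_comp, sum_comp, himage]
  exact sum_congr rfl fun k _ => by rw [h]

variable {F R A X Y : Finset (ℤ × ℤ)}

lemma rowSum_union (h : Disjoint X Y) (i : ℤ) : rowSum (X ∪ Y) i = rowSum X i + rowSum Y i :=
  card_filter_union_of_disjoint _ h

lemma colSum_union (h : Disjoint X Y) (j : ℤ) : colSum (X ∪ Y) j = colSum X j + colSum Y j :=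
  card_filter_union_of_disjoint _ h

lemma rowSum_sdiff_union (hR : R ⊆ F) (hA : Disjoint F A) (i : ℤ) :
    (rowSum (F \ R ∪ A) i : ℤ) = rowSum F i - rowSum R i + rowSum A i := by
  have := card_filter_sdiff_union (fun p : ℤ × ℤ => p.1 = i) hR hA
  unfold rowSum
  omega

lemma colSum_sdiff_union (hR : R ⊆ F) (hA : Disjoint F A) (j : ℤ) :
    (colSum (F \ R ∪ A) j : ℤ) = colSum F j - colSum R j + colSum A j := by
  have := card_filter_sdiff_union (fun p : ℤ × ℤ => p.2 = j) hR hA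
  unfold colSum
  omega

lemma rowSum_eq_card_of_mem_iff {i : ℤ} {S : Finset ℤ} (h : ∀ j, (i, j) ∈ X ↔ j ∈ S) :
    rowSum X i = #S := by
  rw [rowSum, ← card_image_of_injective S (Prod.mk_right_injective i)]
  congr 1
  ext ⟨i', j⟩
  simp only [mem_filter, mem_image, Prod.mk.injEq]
  constructor
  · rintro ⟨hp, rfl⟩
    exact ⟨j, (h j).1 hp, rfl, rfl⟩
  · rintro ⟨j, hj, rfl, rfl⟩
    exact ⟨(h j).2 hj, rfl⟩

end LineSums

section Transpose

def transpose (F : Finset (ℤ × ℤ)) : Finset (ℤ × ℤ) := F.map (Equiv.prodComm ℤ ℤ).toEmbedding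

variable {F X Y : Finset (ℤ × ℤ)}

@[simp] lemma mem_transpose {p : ℤ × ℤ} : p ∈ transpose F ↔ p.swap ∈ F := by
  simp [transpose, mem_map_equiv]

lemma rowSum_transpose (i : ℤ) : rowSum (transpose F) i = colSum F i := by
  rw [rowSum, colSum, transpose, filter_map, card_map]
  rfl

lemma colSum_transpose (j : ℤ) : colSum (transpose F) j = rowSum F j := by
  rw [rowSum, colSum, transpose, filter_map, card_map]
  rfl

lemma card_transpose : #(transpose F) = #F := card_map _

lemma transpose_subset_transpose (h : X ⊆ Y) : transpose X ⊆ transpose Y := map_subset_map.2 h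

lemma colSum_eq_card_of_mem_iff {j : ℤ} {T : Finset ℤ} (h : ∀ i, (i, j) ∈ X ↔ i ∈ T) :
    colSum X j = #T := by
  rw [← rowSum_transpose]
  exact rowSum_eq_card_of_mem_iff fun i => by simpa using h i

lemma disjoint_transpose_of_lt_le {n : ℤ} (hX : ∀ p ∈ X, p.1 < n) (hY : ∀ p ∈ Y, n ≤ p.2) :
    Disjoint X (transpose Y) :=
  disjoint_left.2 fun p hpX hpY => (hX p hpX).not_ge (hY _ (mem_transpose.1 hpY))

end Transpose

section RowIntervals

noncomputable def rowIco (I : Finset ℤ) (l u : ℤ → ℤ) : Finset (ℤ × ℤ) :=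
  I.biUnion fun i => {i} ×ˢ Ico (l i) (u i)

variable {I : Finset ℤ} {l u : ℤ → ℤ}

@[simp] lemma mem_rowIco {p : ℤ × ℤ} :
    p ∈ rowIco I l u ↔ p.1 ∈ I ∧ l p.1 ≤ p.2 ∧ p.2 < u p.1 := by
  obtain ⟨i, j⟩ := p
  simp [rowIco]

lemma card_rowIco (h : ∀ i ∈ I, l i ≤ u i) :
    (#(rowIco I l u) : ℤ) = ∑ i ∈ I, (u i - l i) := by
  rw [rowIco, card_biUnion]
  · push_cast
    refine sum_congr rfl fun i hi => ?_
    rw [card_product, card_singleton, one_mul, Int.card_Ico,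
      Int.toNat_of_nonneg (sub_nonneg.2 (h i hi))]
  · intro i _ i' _ hne
    simp only [disjoint_left, mem_product, mem_singleton]
    rintro p ⟨rfl, -⟩ ⟨h, -⟩
    exact hne h

lemma rowSum_rowIco (i : ℤ) :
    rowSum (rowIco I l u) i = if i ∈ I then (u i - l i).toNat else 0 := by
  rw [rowSum_eq_card_of_mem_iff (S := if i ∈ I then Ico (l i) (u i) else ∅)]
  · split_ifs <;> simp
  · intro j
    split_ifs with hi <;> simp [hi]

lemma colSum_rowIco (j : ℤ) : colSum (rowIco I l u) j = #{i ∈ I | l i ≤ j ∧ j < u i} :=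
  colSum_eq_card_of_mem_iff fun i => by simp

end RowIntervals

section Bands

noncomputable def band (lo hi c s : ℤ) : Finset (ℤ × ℤ) :=
  rowIco (Ico lo hi) (fun i => c - s * i) (fun i => c - s * i + s)

variable {lo hi c s : ℤ}

@[simp] lemma mem_band {p : ℤ × ℤ} :
    p ∈ band lo hi c s ↔ (lo ≤ p.1 ∧ p.1 < hi) ∧ c - s * p.1 ≤ p.2 ∧ p.2 < c - s * p.1 + s := by
  simp [band]

lemma card_band (hs : 0 ≤ s) (h : lo ≤ hi) : (#(band lo hi c s) : ℤ) = (hi - lo) * s := by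
  rw [band, card_rowIco fun _ _ => by linarith]
  simp [Int.toNat_of_nonneg (sub_nonneg.2 h)]

lemma rowSum_band (hs : 0 ≤ s) (i : ℤ) :
    (rowSum (band lo hi c s) i : ℤ) = if lo ≤ i ∧ i < hi then s else 0 := by
  rw [band, rowSum_rowIco]
  split_ifs <;> simp_all

lemma colSum_band (hs : 0 ≤ s) (j : ℤ) : (colSum (band lo hi c s) j : ℤ) =
    if c - s * (hi - 1) ≤ j ∧ j < c - s * lo + s then 1 else 0 := by
  rw [band, colSum_rowIco]
  rcases hs.eq_or_lt with rfl | hs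
  · have hempty : ¬(c ≤ j ∧ j < c) := fun h => h.2.not_ge h.1
    simp [hempty]
  set e := c + s - 1 - j
  have hrow : ∀ i, (c - s * i ≤ j ∧ j < c - s * i + s) ↔ i = e / s := fun i => by
    constructor
    · rintro ⟨h1, h2⟩
      exact le_antisymm ((Int.le_ediv_iff_mul_le hs).2 (by linarith))
        (Int.lt_add_one_iff.1 ((Int.ediv_lt_iff_lt_mul hs).2 (by linarith)))
    · rintro rfl
      have := Int.ediv_mul_le e hs.ne'
      have := Int.lt_ediv_add_one_mul_self e hs
      constructor <;> linarith
  have hmem : e / s ∈ Ico lo hi ↔ c - s * (hi - 1) ≤ j ∧ j < c - s * lo + s := by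
    rw [mem_Ico, Int.le_ediv_iff_mul_le hs, Int.ediv_lt_iff_lt_mul hs]
    constructor <;> rintro ⟨h1, h2⟩ <;> constructor <;> linarith
  simp only [hrow, filter_eq', hmem]
  split_ifs <;> simp

lemma fst_lt_and_le_snd_of_mem_band {n a : ℤ} (ha : 0 ≤ a) (hc : n + (n - 1) * a ≤ c)
    {p : ℤ × ℤ} (hp : p ∈ band lo n c a) : p.1 < n ∧ n ≤ p.2 := by
  obtain ⟨⟨-, hi⟩, hj, -⟩ := mem_band.1 hp
  have : a * p.1 ≤ a * (n - 1) := mul_le_mul_of_nonneg_left (by linarith) ha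
  exact ⟨hi, by linarith⟩

end Bands

section Uniqueness

variable {F : Finset (ℤ × ℤ)}

lemma mem_iff_lt_colSum (hnonneg : ∀ p ∈ F, 0 ≤ p.1)
    (hdown : ∀ p ∈ F, ∀ k, 0 ≤ k → k ≤ p.1 → (k, p.2) ∈ F) {i j : ℤ} (hi : 0 ≤ i) :
    (i, j) ∈ F ↔ i < colSum F j := by
  have hinj : Function.Injective fun k : ℤ => (k, j) := Prod.mk_left_injective j
  constructor
  · intro hmem
    have hsub : (Icc 0 i).image (fun k => (k, j)) ⊆ {q ∈ F | q.2 = j} := by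
      intro q hq
      obtain ⟨k, hk, rfl⟩ := mem_image.1 hq
      rw [mem_Icc] at hk
      exact mem_filter.2 ⟨hdown _ hmem k hk.1 hk.2, rfl⟩
    have := card_le_card hsub
    rw [card_image_of_injective _ hinj, Int.card_Icc] at this
    change _ ≤ colSum F j at this
    omega
  · intro hlt
    by_contra hmem
    have hsub : {q ∈ F | q.2 = j} ⊆ (Ico 0 i).image (fun k => (k, j)) := by
      intro q hq
      obtain ⟨hqF, rfl⟩ := mem_filter.1 hq
      refine mem_image.2 ⟨q.1, mem_Ico.2 ⟨hnonneg q hqF, ?_⟩, rfl⟩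
      by_contra hge
      exact hmem (hdown q hqF i hi (not_lt.1 hge))
    have := card_le_card hsub
    rw [card_image_of_injective _ hinj, Int.card_Ico] at this
    change colSum F j ≤ _ at this
    omega

theorem uniquelyDetermined_of_initial_columns (hnonneg : ∀ p ∈ F, 0 ≤ p.1)
    (hdown : ∀ p ∈ F, ∀ k, 0 ≤ k → k ≤ p.1 → (k, p.2) ∈ F) : UniquelyDetermined F := by
  intro G hrow hcol
  set w : ℤ × ℤ → ℤ := fun p => 2 * colSum F p.2 - (2 * p.1 + 1)
  have hsum : ∑ p ∈ G, w p = ∑ p ∈ F, w p := by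
    simp only [w, sum_sub_distrib]
    rw [sum_comp_eq_of_card_fiber_eq hcol (fun j => 2 * (colSum F j : ℤ)),
      sum_comp_eq_of_card_fiber_eq hrow (fun i => 2 * i + 1)]
  have hG : ∀ p ∈ G, 0 ≤ p.1 := fun p hp => by
    have : 0 < rowSum F p.1 := hrow p.1 ▸ card_pos.2 ⟨p, mem_filter.2 ⟨hp, rfl⟩⟩
    obtain ⟨q, hq⟩ := card_pos.1 this
    obtain ⟨hqF, hq1⟩ := mem_filter.1 hq
    exact hq1 ▸ hnonneg q hqF
  have hw : ∀ p : ℤ × ℤ, 0 ≤ p.1 → (p ∈ F ↔ 0 < w p) := fun ⟨i, j⟩ hi => by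
    rw [mem_iff_lt_colSum hnonneg hdown hi]
    simp only [w]
    omega
  have hpos : ∀ p ∈ F \ G, 0 < w p := fun p hp =>
    (hw p (hnonneg p (mem_sdiff.1 hp).1)).1 (mem_sdiff.1 hp).1
  have hneg : ∀ p ∈ G \ F, w p < 0 := fun p hp => by
    have := (hw p (hG p (mem_sdiff.1 hp).1)).not.1 (mem_sdiff.1 hp).2
    simp only [w] at this ⊢
    omega
  have hdiff : ∑ p ∈ G \ F, w p = ∑ p ∈ F \ G, w p := sum_sdiff_eq_sum_sdiff_iff.2 hsum
  have hGF : G \ F = ∅ := by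
    by_contra hne
    have := sum_neg hneg (nonempty_iff_ne_empty.2 hne)
    have := sum_nonneg fun p hp => (hpos p hp).le
    omega
  have hFG : F \ G = ∅ := by
    by_contra hne
    have := sum_pos hpos (nonempty_iff_ne_empty.2 hne)
    have := sum_nonpos fun p hp => (hneg p hp).le
    omega
  exact Subset.antisymm (sdiff_eq_empty_iff_subset.1 hGF) (sdiff_eq_empty_iff_subset.1 hFG)

end Uniqueness

lemma sum_Ico_sub_mul_two {n : ℤ} (hn : 0 ≤ n) : ∑ i ∈ Ico 0 n, (n - i) * 2 = n * (n + 1) := by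
  lift n to ℕ using hn
  induction n with
  | zero => simp
  | succ k ih =>
    have hstep : ∀ i : ℤ, ((k : ℤ) + 1 - i) * 2 = (k - i) * 2 + 2 := fun i => by ring
    push_cast
    rw [← insert_Ico_right_eq_Ico_add_one (by omega), sum_insert (by simp)]
    simp only [hstep, sum_add_distrib, ih, sum_const, Int.card_Ico, sub_zero, Int.toNat_natCast,
      nsmul_eq_mul]
    ring

section Staircase

variable (n a : ℤ)

noncomputable def upperStairs : Finset (ℤ × ℤ) :=
  rowIco (Ico 0 n) (fun _ => 0) (fun i => n + (n - i) * a)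

noncomputable def stairs : Finset (ℤ × ℤ) := upperStairs n a ∪ transpose (upperStairs n a)

noncomputable def stairsRemoved : Finset (ℤ × ℤ) :=
  band 0 n (n + (n - 1) * a) a ∪ transpose (band 0 n (n + (n - 1) * a) a)

/-- Below the square the bands are transposed, i.e. they move cells along columns: column
`j < n` loses its last `a` cells in `stairsRemoved`, and column `j ≥ 1` receives here the cells
lost by column `j - 1`. The last band is the antidiagonal of `[n, n + a)²`. -/
noncomputable def stairsAdded : Finset (ℤ × ℤ) :=
  band 0 n (n + n * a) a ∪ transpose (band 1 n (n + n * a) a) ∪ band n (n + a) (2 * n + a - 1) 1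

noncomputable def shiftedStairs : Finset (ℤ × ℤ) :=
  stairs n a \ stairsRemoved n a ∪ stairsAdded n a

variable {n a}

lemma mem_stairs {p : ℤ × ℤ} : p ∈ stairs n a ↔
    (0 ≤ p.1 ∧ p.1 < n ∧ 0 ≤ p.2 ∧ p.2 < n + (n - p.1) * a) ∨
      (0 ≤ p.2 ∧ p.2 < n ∧ 0 ≤ p.1 ∧ p.1 < n + (n - p.2) * a) := by
  simp [stairs, upperStairs, and_assoc]

lemma stairs_uniquelyDetermined (ha : 0 ≤ a) : UniquelyDetermined (stairs n a) := by
  refine uniquelyDetermined_of_initial_columns (fun p hp => ?_) (fun p hp k hk0 hk => ?_)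
  · rcases mem_stairs.1 hp with h | h
    exacts [h.1, h.2.2.1]
  · rcases mem_stairs.1 hp with ⟨-, hi, hj0, hj⟩ | ⟨hj0, hj, -, hi⟩
    · have : (n - p.1) * a ≤ (n - k) * a := mul_le_mul_of_nonneg_right (by linarith) ha
      exact mem_stairs.2 (Or.inl ⟨hk0, by linarith, hj0, by dsimp only; linarith⟩)
    · exact mem_stairs.2 (Or.inr ⟨hj0, hj, hk0, by dsimp only; linarith⟩)

lemma card_stairs (hn : 0 ≤ n) (ha : 0 ≤ a) :
    (#(stairs n a) : ℤ) = n ^ 2 + n ^ 2 * a + n * a := by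
  have hupper : (#(upperStairs n a) : ℤ) * 2 = 2 * n ^ 2 + n * (n + 1) * a := by
    have hterm : ∀ i : ℤ, (n + (n - i) * a - 0) * 2 = 2 * n + a * ((n - i) * 2) :=
      fun i => by ring
    rw [upperStairs, card_rowIco fun i hi => ?_, sum_mul, sum_congr rfl fun i _ => hterm i,
      sum_add_distrib, ← mul_sum _ (fun i => (n - i) * 2), sum_Ico_sub_mul_two hn, sum_const,
      Int.card_Ico, sub_zero, nsmul_eq_mul, Int.toNat_of_nonneg hn]
    · ring
    · have : 0 ≤ (n - i) * a := mul_nonneg (by linarith [(mem_Ico.1 hi).2]) ha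
      linarith
  have hsquare : upperStairs n a ∩ transpose (upperStairs n a) = Ico 0 n ×ˢ Ico 0 n := by
    ext ⟨i, j⟩
    simp only [mem_inter, upperStairs, mem_rowIco, mem_transpose, Prod.swap_prod_mk, mem_Ico,
      mem_product]
    constructor
    · rintro ⟨⟨hi, -⟩, hj, -⟩
      exact ⟨hi, hj⟩
    · rintro ⟨⟨hi0, hi⟩, hj0, hj⟩
      have hi' : 0 ≤ (n - i) * a := mul_nonneg (by linarith) ha
      have hj' : 0 ≤ (n - j) * a := mul_nonneg (by linarith) ha
      exact ⟨⟨⟨hi0, hi⟩, hj0, by linarith⟩, ⟨hj0, hj⟩, hi0, by linarith⟩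
  have hunion := card_union_add_card_inter (upperStairs n a) (transpose (upperStairs n a))
  rw [hsquare, card_product, card_transpose, Int.card_Ico, sub_zero] at hunion
  have hcast := congrArg (Nat.cast : ℕ → ℤ) hunion
  push_cast [Int.toNat_of_nonneg hn] at hcast
  rw [stairs]
  linarith

lemma stairsRemoved_subset (ha : 0 ≤ a) : stairsRemoved n a ⊆ stairs n a := by
  have hband : band 0 n (n + (n - 1) * a) a ⊆ upperStairs n a := fun p hp => by
    obtain ⟨⟨hi0, hi⟩, hj, hj'⟩ := mem_band.1 hp
    have : 0 ≤ (n - 1 - p.1) * a := mul_nonneg (by linarith) ha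
    exact mem_rowIco.2 ⟨mem_Ico.2 ⟨hi0, hi⟩, by linarith, by linarith⟩
  exact union_subset_union hband (transpose_subset_transpose hband)

lemma disjoint_stairs_stairsAdded (ha : 0 ≤ a) : Disjoint (stairs n a) (stairsAdded n a) := by
  refine disjoint_left.2 fun p hp hpA => ?_
  simp only [stairsAdded, mem_union, mem_band, mem_transpose, Prod.fst_swap,
    Prod.snd_swap] at hpA
  rcases mem_stairs.1 hp with ⟨-, hi, -, hj⟩ | ⟨-, hj, -, hi⟩
  · rcases hpA with (⟨-, h, -⟩ | ⟨⟨-, hj'⟩, h, -⟩) | ⟨⟨h, -⟩, -⟩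
    · linarith
    · nlinarith [mul_nonneg (sub_nonneg.2 hj'.le) ha]
    · linarith
  · rcases hpA with (⟨⟨-, hi'⟩, h, -⟩ | ⟨-, h, -⟩) | ⟨⟨-, hi'⟩, h, -⟩
    · nlinarith [mul_nonneg (sub_nonneg.2 hi'.le) ha]
    · linarith
    · linarith

lemma disjoint_removedBands (ha : 0 ≤ a) :
    Disjoint (band 0 n (n + (n - 1) * a) a) (transpose (band 0 n (n + (n - 1) * a) a)) :=
  disjoint_transpose_of_lt_le (fun _ hp => (fst_lt_and_le_snd_of_mem_band ha le_rfl hp).1)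
    (fun _ hp => (fst_lt_and_le_snd_of_mem_band ha le_rfl hp).2)

lemma disjoint_addedBands (ha : 0 ≤ a) :
    Disjoint (band 0 n (n + n * a) a) (transpose (band 1 n (n + n * a) a)) :=
  disjoint_transpose_of_lt_le
    (fun _ hp => (fst_lt_and_le_snd_of_mem_band ha (by linarith) hp).1)
    (fun _ hp => (fst_lt_and_le_snd_of_mem_band ha (by linarith) hp).2)

lemma disjoint_addedBands_antidiagonal (ha : 0 ≤ a) :
    Disjoint (band 0 n (n + n * a) a ∪ transpose (band 1 n (n + n * a) a))
      (band n (n + a) (2 * n + a - 1) 1) := by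
  refine disjoint_left.2 fun p hp hpD => ?_
  obtain ⟨⟨hi, hi'⟩, hj, -⟩ := mem_band.1 hpD
  rcases mem_union.1 hp with hp | hp
  · exact (fst_lt_and_le_snd_of_mem_band ha (by linarith) hp).1.not_ge hi
  · have := (fst_lt_and_le_snd_of_mem_band ha (by linarith) (mem_transpose.1 hp)).1
    simp only [Prod.fst_swap] at this
    linarith

lemma card_stairsRemoved (hn : 0 ≤ n) (ha : 0 ≤ a) :
    (#(stairsRemoved n a) : ℤ) = 2 * n * a := by
  rw [stairsRemoved, card_union_of_disjoint (disjoint_removedBands ha), card_transpose,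
    Nat.cast_add, card_band ha hn]
  ring

lemma rowSum_stairsRemoved (ha : 0 ≤ a) (i : ℤ) :
    (rowSum (stairsRemoved n a) i : ℤ) =
      (if 0 ≤ i ∧ i < n then a else 0) + (if n ≤ i ∧ i < n + n * a then 1 else 0) := by
  rw [stairsRemoved, rowSum_union (disjoint_removedBands ha), Nat.cast_add, rowSum_transpose,
    rowSum_band ha, colSum_band ha, show n + (n - 1) * a - a * (n - 1) = n by ring,
    show n + (n - 1) * a - a * 0 + a = n + n * a by ring]

lemma colSum_stairsRemoved (ha : 0 ≤ a) (j : ℤ) :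
    (colSum (stairsRemoved n a) j : ℤ) =
      (if n ≤ j ∧ j < n + n * a then 1 else 0) + (if 0 ≤ j ∧ j < n then a else 0) := by
  rw [stairsRemoved, colSum_union (disjoint_removedBands ha), Nat.cast_add, colSum_transpose,
    rowSum_band ha, colSum_band ha, show n + (n - 1) * a - a * (n - 1) = n by ring,
    show n + (n - 1) * a - a * 0 + a = n + n * a by ring]

lemma rowSum_stairsAdded (ha : 0 ≤ a) (i : ℤ) :
    (rowSum (stairsAdded n a) i : ℤ) = (if 0 ≤ i ∧ i < n then a else 0) +
      (if n + a ≤ i ∧ i < n + n * a then 1 else 0) + (if n ≤ i ∧ i < n + a then 1 else 0) := by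
  rw [stairsAdded, rowSum_union (disjoint_addedBands_antidiagonal ha),
    rowSum_union (disjoint_addedBands ha), Nat.cast_add, Nat.cast_add, rowSum_transpose,
    rowSum_band ha, colSum_band ha, rowSum_band zero_le_one,
    show n + n * a - a * (n - 1) = n + a by ring, show n + n * a - a * 1 + a = n + n * a by ring]

lemma colSum_stairsAdded (ha : 0 ≤ a) (j : ℤ) :
    (colSum (stairsAdded n a) j : ℤ) = (if n + a ≤ j ∧ j < n + n * a + a then 1 else 0) +
      (if 1 ≤ j ∧ j < n then a else 0) + (if n ≤ j ∧ j < n + a then 1 else 0) := by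
  rw [stairsAdded, colSum_union (disjoint_addedBands_antidiagonal ha),
    colSum_union (disjoint_addedBands ha), Nat.cast_add, Nat.cast_add, colSum_transpose,
    rowSum_band ha, colSum_band ha, colSum_band zero_le_one,
    show n + n * a - a * (n - 1) = n + a by ring,
    show n + n * a - a * 0 + a = n + n * a + a by ring,
    show 2 * n + a - 1 - 1 * (n + a - 1) = n by ring,
    show 2 * n + a - 1 - 1 * n + 1 = n + a by ring]

lemma rowSum_shiftedStairs (hn : 0 < n) (ha : 0 ≤ a) (i : ℤ) :
    rowSum (shiftedStairs n a) i = rowSum (stairs n a) i := by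
  have h := rowSum_sdiff_union (stairsRemoved_subset (n := n) ha)
    (disjoint_stairs_stairsAdded ha) i
  rw [rowSum_stairsRemoved ha, rowSum_stairsAdded ha] at h
  have : a ≤ n * a := le_mul_of_one_le_left ha hn
  rw [shiftedStairs]
  split_ifs at h <;> omega

lemma abs_colSum_stairs_sub_shiftedStairs (hn : 0 < n) (ha : 0 ≤ a) (j : ℤ) :
    |(colSum (stairs n a) j : ℤ) - colSum (shiftedStairs n a) j| =
      (if j = 0 then a else 0) + (if j ∈ Ico (n + n * a) (n + n * a + a) then 1 else 0) := by
  have h := colSum_sdiff_union (stairsRemoved_subset (n := n) ha)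
    (disjoint_stairs_stairsAdded ha) j
  rw [colSum_stairsRemoved ha, colSum_stairsAdded ha] at h
  have : a ≤ n * a := le_mul_of_one_le_left ha hn
  rw [shiftedStairs, h, abs_eq (by split_ifs <;> omega)]
  simp only [mem_Ico]
  split_ifs <;> omega

lemma lineError_stairs_shiftedStairs (hn : 0 < n) (ha : 0 ≤ a) :
    lineError (stairs n a) (shiftedStairs n a) = 2 * a := by
  set E := Ico (n + n * a) (n + n * a + a)
  have hsupp : Function.support (fun j : ℤ => (if j = 0 then a else 0) + if j ∈ E then 1 else 0)
      ⊆ ↑(insert 0 E) := Function.support_subset_iff'.2 fun j hj => by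
    simp only [coe_insert, Set.mem_insert_iff, mem_coe, not_or] at hj
    simp [hj.1, hj.2]
  rw [lineError, finsum_eq_zero_of_forall_eq_zero fun i => by simp [rowSum_shiftedStairs hn ha],
    finsum_congr (abs_colSum_stairs_sub_shiftedStairs hn ha),
    finsum_eq_sum_of_support_subset _ hsupp, sum_add_distrib, sum_ite_eq',
    if_pos (mem_insert_self 0 E), sum_ite_mem, inter_eq_right.2 (subset_insert 0 E), sum_const,
    Int.card_Ico, add_sub_cancel_left, nsmul_one, Int.toNat_of_nonneg ha]
  ring

lemma card_shiftedStairs (hn : 0 < n) (ha : 0 ≤ a) : #(shiftedStairs n a) = #(stairs n a) := by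
  rw [card_eq_sum_ones, card_eq_sum_ones]
  exact sum_comp_eq_of_card_fiber_eq (rowSum_shiftedStairs hn ha) fun _ => 1

lemma card_stairs_inter_shiftedStairs (hn : 0 ≤ n) (ha : 0 ≤ a) :
    (#(stairs n a ∩ shiftedStairs n a) : ℤ) = #(stairs n a) - 2 * n * a := by
  have hinter : stairs n a ∩ shiftedStairs n a = stairs n a \ stairsRemoved n a := by
    ext p
    have : p ∈ stairs n a → p ∉ stairsAdded n a :=
      fun h => disjoint_left.1 (disjoint_stairs_stairsAdded ha) h
    simp only [shiftedStairs, mem_inter, mem_union, mem_sdiff]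
    tauto
  rw [hinter, card_sdiff_of_subset (stairsRemoved_subset ha),
    Nat.cast_sub (card_le_card (stairsRemoved_subset ha)), card_stairsRemoved hn ha]

end Staircase

theorem large_intersection_example_exists_general (N α : ℕ) (hN : 0 < N) :
    ∃ F1 F2 : Finset (ℤ × ℤ),
      UniquelyDetermined F1 ∧
      F1.card = F2.card ∧
      lineError F1 F2 = 2 * α ∧
      ((F1 ∩ F2).card : ℤ) = (N : ℤ) ^ 2 + (N : ℤ) ^ 2 * α - (N : ℤ) * α ∧
      (F1.card : ℤ) = (N : ℤ) ^ 2 + (N : ℤ) ^ 2 * α + (N : ℤ) * α := by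
  have hn : (0 : ℤ) < N := by exact_mod_cast hN
  have ha : (0 : ℤ) ≤ α := by positivity
  refine ⟨stairs N α, shiftedStairs N α, stairs_uniquelyDetermined ha,
    (card_shiftedStairs hn ha).symm, lineError_stairs_shiftedStairs hn ha, ?_,
    card_stairs hn.le ha⟩
  rw [card_stairs_inter_shiftedStairs hn.le ha, card_stairs hn.le ha]
  ring

theorem large_intersection_example_exists (N α : ℕ) (hN : 0 < N) (hα : 0 < α) :
    ∃ F1 F2 : Finset (ℤ × ℤ),
      UniquelyDetermined F1 ∧
      F1.card = F2.card ∧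
      lineError F1 F2 = 2 * α ∧
      ((F1 ∩ F2).card : ℤ) = (N : ℤ) ^ 2 + (N : ℤ) ^ 2 * α - (N : ℤ) * α ∧
      (F1.card : ℤ) = (N : ℤ) ^ 2 + (N : ℤ) ^ 2 * α + (N : ℤ) * α :=
  large_intersection_example_exists_general N α hN
end

section
/- Let F1 and F2 be finite subsets of ℤ² with |F1| > |F2|. Then there exists a finite set F3 ⊆ ℤ² with F2 ⊆ F3, |F3| = |F1|, F1 ∩ F3 = F1 ∩ F2, and such that the error in the line sums of F1 and F3 equals the error in the line sums of F1 and F2. -/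
lemma rowSum_eq_zero {F : Finset (ℤ × ℤ)} {i : ℤ} (h : i ∉ F.image Prod.fst) :
    rowSum F i = 0 := by
  simp only [rowSum, Finset.card_eq_zero, Finset.filter_eq_empty_iff]
  intro p hp hpi
  exact h (Finset.mem_image.2 ⟨p, hp, hpi⟩)

lemma colSum_eq_zero {F : Finset (ℤ × ℤ)} {j : ℤ} (h : j ∉ F.image Prod.snd) :
    colSum F j = 0 := by
  simp only [colSum, Finset.card_eq_zero, Finset.filter_eq_empty_iff]
  intro p hp hpj
  exact h (Finset.mem_image.2 ⟨p, hp, hpj⟩)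

lemma card_eq_sum_rowSum (F : Finset (ℤ × ℤ)) (s : Finset ℤ)
    (hs : F.image Prod.fst ⊆ s) : F.card = ∑ i ∈ s, rowSum F i :=
  Finset.card_eq_sum_card_fiberwise (fun p hp => hs (Finset.mem_image_of_mem _ hp))

lemma exists_row (F1 F2 : Finset (ℤ × ℤ)) (h : F2.card < F1.card) :
    ∃ i, rowSum F2 i < rowSum F1 i := by
  by_contra hc
  push_neg at hc
  set s := (F1 ∪ F2).image Prod.fst with hs
  have h1 : F1.card = ∑ i ∈ s, rowSum F1 i :=
    card_eq_sum_rowSum _ _ (Finset.image_subset_image Finset.subset_union_left)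
  have h2 : F2.card = ∑ i ∈ s, rowSum F2 i :=
    card_eq_sum_rowSum _ _ (Finset.image_subset_image Finset.subset_union_right)
  have hle : ∑ i ∈ s, rowSum F1 i ≤ ∑ i ∈ s, rowSum F2 i :=
    Finset.sum_le_sum (fun i _ => hc i)
  omega

lemma step (F1 F2 : Finset (ℤ × ℤ)) (h : F2.card < F1.card) :
    ∃ F3, F2 ⊆ F3 ∧ F3.card = F2.card + 1 ∧ F1 ∩ F3 = F1 ∩ F2 ∧
      lineError F1 F3 = lineError F1 F2 := by
  obtain ⟨i, hi⟩ := exists_row F1 F2 h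
  obtain ⟨j, hj⟩ := Infinite.exists_notMem_finset ((F1 ∪ F2).image Prod.snd)
  have hjF1 : j ∉ F1.image Prod.snd := fun hm =>
    hj (Finset.image_subset_image Finset.subset_union_left hm)
  have hjF2 : j ∉ F2.image Prod.snd := fun hm =>
    hj (Finset.image_subset_image Finset.subset_union_right hm)
  have hpF1 : (i, j) ∉ F1 := fun hm => hjF1 (Finset.mem_image.2 ⟨_, hm, rfl⟩)
  have hpF2 : (i, j) ∉ F2 := fun hm => hjF2 (Finset.mem_image.2 ⟨_, hm, rfl⟩)
  set F3 := insert (i, j) F2 with hF3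
  have hr : ∀ i', rowSum F3 i' = if i = i' then rowSum F2 i' + 1 else rowSum F2 i' := by
    intro i'
    simp only [hF3, rowSum, Finset.filter_insert]
    split
    · rw [Finset.card_insert_of_notMem (fun hm => hpF2 (Finset.mem_filter.1 hm).1)]
    · rfl
  have hc : ∀ j', colSum F3 j' = if j = j' then colSum F2 j' + 1 else colSum F2 j' := by
    intro j'
    simp only [hF3, colSum, Finset.filter_insert]
    split
    · rw [Finset.card_insert_of_notMem (fun hm => hpF2 (Finset.mem_filter.1 hm).1)]
    · rfl
  refine ⟨F3, Finset.subset_insert _ _, Finset.card_insert_of_notMem hpF2, ?_, ?_⟩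
  · rw [hF3, Finset.inter_insert_of_notMem hpF1]
  · -- line error computation
    set S : Finset ℤ := insert i ((F1 ∪ F2).image Prod.fst) with hS
    set T : Finset ℤ := insert j ((F1 ∪ F2).image Prod.snd) with hT
    have hSzero : ∀ i' ∉ S, rowSum F1 i' = 0 ∧ rowSum F2 i' = 0 ∧ rowSum F3 i' = 0 := by
      intro i' hi'
      simp only [hS, Finset.mem_insert, not_or] at hi'
      have h1 : i' ∉ (F1 ∪ F2).image Prod.fst := hi'.2
      have hz1 : rowSum F1 i' = 0 := rowSum_eq_zero (fun hm => h1
        (Finset.image_subset_image Finset.subset_union_left hm))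
      have hz2 : rowSum F2 i' = 0 := rowSum_eq_zero (fun hm => h1
        (Finset.image_subset_image Finset.subset_union_right hm))
      refine ⟨hz1, hz2, ?_⟩
      rw [hr i', if_neg (fun he => hi'.1 he.symm), hz2]
    have hTzero : ∀ j' ∉ T, colSum F1 j' = 0 ∧ colSum F2 j' = 0 ∧ colSum F3 j' = 0 := by
      intro j' hj'
      simp only [hT, Finset.mem_insert, not_or] at hj'
      have h1 : j' ∉ (F1 ∪ F2).image Prod.snd := hj'.2
      have hz1 : colSum F1 j' = 0 := colSum_eq_zero (fun hm => h1
        (Finset.image_subset_image Finset.subset_union_left hm))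
      have hz2 : colSum F2 j' = 0 := colSum_eq_zero (fun hm => h1
        (Finset.image_subset_image Finset.subset_union_right hm))
      refine ⟨hz1, hz2, ?_⟩
      rw [hc j', if_neg (fun he => hj'.1 he.symm), hz2]
    have row2 : (∑ᶠ i' : ℤ, |(rowSum F1 i' : ℤ) - (rowSum F2 i' : ℤ)|) =
        ∑ i' ∈ S, |(rowSum F1 i' : ℤ) - (rowSum F2 i' : ℤ)| := by
      apply finsum_eq_finset_sum_of_support_subset
      intro i' hi'
      by_contra hiS
      obtain ⟨z1, z2, _⟩ := hSzero i' hiS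
      simp [Function.mem_support, z1, z2] at hi'
    have row3 : (∑ᶠ i' : ℤ, |(rowSum F1 i' : ℤ) - (rowSum F3 i' : ℤ)|) =
        ∑ i' ∈ S, |(rowSum F1 i' : ℤ) - (rowSum F3 i' : ℤ)| := by
      apply finsum_eq_finset_sum_of_support_subset
      intro i' hi'
      by_contra hiS
      obtain ⟨z1, _, z3⟩ := hSzero i' hiS
      simp [Function.mem_support, z1, z3] at hi'
    have col2 : (∑ᶠ j' : ℤ, |(colSum F1 j' : ℤ) - (colSum F2 j' : ℤ)|) =
        ∑ j' ∈ T, |(colSum F1 j' : ℤ) - (colSum F2 j' : ℤ)| := by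
      apply finsum_eq_finset_sum_of_support_subset
      intro j' hj'
      by_contra hjT
      obtain ⟨z1, z2, _⟩ := hTzero j' hjT
      simp [Function.mem_support, z1, z2] at hj'
    have col3 : (∑ᶠ j' : ℤ, |(colSum F1 j' : ℤ) - (colSum F3 j' : ℤ)|) =
        ∑ j' ∈ T, |(colSum F1 j' : ℤ) - (colSum F3 j' : ℤ)| := by
      apply finsum_eq_finset_sum_of_support_subset
      intro j' hj'
      by_contra hjT
      obtain ⟨z1, _, z3⟩ := hTzero j' hjT
      simp [Function.mem_support, z1, z3] at hj'
    have hiS : i ∈ S := Finset.mem_insert_self _ _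
    have hjT : j ∈ T := Finset.mem_insert_self _ _
    have rowsplit3 : ∑ i' ∈ S, |(rowSum F1 i' : ℤ) - (rowSum F3 i' : ℤ)| =
        |(rowSum F1 i : ℤ) - (rowSum F3 i : ℤ)| +
        ∑ i' ∈ S.erase i, |(rowSum F1 i' : ℤ) - (rowSum F3 i' : ℤ)| :=
      (Finset.add_sum_erase _ _ hiS).symm
    have rowsplit2 : ∑ i' ∈ S, |(rowSum F1 i' : ℤ) - (rowSum F2 i' : ℤ)| =
        |(rowSum F1 i : ℤ) - (rowSum F2 i : ℤ)| +
        ∑ i' ∈ S.erase i, |(rowSum F1 i' : ℤ) - (rowSum F2 i' : ℤ)| :=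
      (Finset.add_sum_erase _ _ hiS).symm
    have colsplit3 : ∑ j' ∈ T, |(colSum F1 j' : ℤ) - (colSum F3 j' : ℤ)| =
        |(colSum F1 j : ℤ) - (colSum F3 j : ℤ)| +
        ∑ j' ∈ T.erase j, |(colSum F1 j' : ℤ) - (colSum F3 j' : ℤ)| :=
      (Finset.add_sum_erase _ _ hjT).symm
    have colsplit2 : ∑ j' ∈ T, |(colSum F1 j' : ℤ) - (colSum F2 j' : ℤ)| =
        |(colSum F1 j : ℤ) - (colSum F2 j : ℤ)| +
        ∑ j' ∈ T.erase j, |(colSum F1 j' : ℤ) - (colSum F2 j' : ℤ)| :=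
      (Finset.add_sum_erase _ _ hjT).symm
    have rowrest : ∑ i' ∈ S.erase i, |(rowSum F1 i' : ℤ) - (rowSum F3 i' : ℤ)| =
        ∑ i' ∈ S.erase i, |(rowSum F1 i' : ℤ) - (rowSum F2 i' : ℤ)| := by
      apply Finset.sum_congr rfl
      intro i' hi'
      rw [hr i', if_neg (fun he => (Finset.mem_erase.1 hi').1 he.symm)]
    have colrest : ∑ j' ∈ T.erase j, |(colSum F1 j' : ℤ) - (colSum F3 j' : ℤ)| =
        ∑ j' ∈ T.erase j, |(colSum F1 j' : ℤ) - (colSum F2 j' : ℤ)| := by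
      apply Finset.sum_congr rfl
      intro j' hj'
      rw [hc j', if_neg (fun he => (Finset.mem_erase.1 hj').1 he.symm)]
    have hterm_row : |(rowSum F1 i : ℤ) - (rowSum F3 i : ℤ)| =
        |(rowSum F1 i : ℤ) - (rowSum F2 i : ℤ)| - 1 := by
      rw [hr i, if_pos rfl]
      have h1 : (rowSum F2 i : ℤ) < rowSum F1 i := by exact_mod_cast hi
      push_cast
      rw [abs_of_nonneg (by omega), abs_of_nonneg (by omega)]
      ring
    have hterm_col : |(colSum F1 j : ℤ) - (colSum F3 j : ℤ)| =
        |(colSum F1 j : ℤ) - (colSum F2 j : ℤ)| + 1 := by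
      rw [hc j, if_pos rfl, colSum_eq_zero hjF1, colSum_eq_zero hjF2]
      norm_num
    rw [lineError, lineError, row2, row3, col2, col3, rowsplit3, rowsplit2,
      colsplit3, colsplit2, rowrest, colrest, hterm_row, hterm_col]
    ring

theorem enlarge_smaller_set
    (F1 F2 : Finset (ℤ × ℤ)) (hcard : F2.card < F1.card) :
    ∃ F3 : Finset (ℤ × ℤ), F2 ⊆ F3 ∧ F3.card = F1.card ∧
      F1 ∩ F3 = F1 ∩ F2 ∧ lineError F1 F3 = lineError F1 F2 := by
  obtain ⟨n, hn⟩ : ∃ n, F1.card - F2.card = n := ⟨_, rfl⟩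
  induction n generalizing F2 with
  | zero => omega
  | succ n ih =>
    obtain ⟨F3, hsub, hc, hint, herr⟩ := step F1 F2 hcard
    rcases eq_or_lt_of_le (show F3.card ≤ F1.card by omega) with heq | hlt
    · exact ⟨F3, hsub, heq, hint, herr⟩
    · obtain ⟨F4, h4sub, h4c, h4int, h4err⟩ := ih F3 hlt (by omega)
      exact ⟨F4, hsub.trans h4sub, h4c, h4int.trans hint, h4err.trans herr⟩
end
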